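/- (Generalization bound with joint distributions, Theorem A.2.) Let X be a measurable space and Y = {−1, 1}. Let M be a countable set of measurable functions from X × Y to {−1, 1}. Let P_S and P_T be probability measures on X and let κ_S and κ_T be Markov kernels from X to Y, with source joint distribution P_S ⊗ κ_S and target joint distribution P_T ⊗ κ_T. Let H be a nonempty set of measurable hypotheses and set λ_H := inf_{h' ∈ H} ( ε_{P_S ⊗ κ_S}(h') + ε_{P_T ⊗ κ_T}(h') ). Then for every measurable hypothesis h with m_h ∈ M and the constant function 1 ∈ M, ε_{P_T ⊗ κ_T}(h) ≤ ε_{P_S ⊗ κ_S}(h) + d^{κ_S}_{M△M}(P_S, P_T) + ∫_X D_M(κ_S, κ_T)(x) dP_T(x) + λ_H. -/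

import Mathlib

/-!
The error event of `h` is `A(m_h, 1)`, and both `m_h` and `1` lie in `M`. Writing `A_x` for its
sections, the target risk `∫ κT(x)(A_x) dPT` exceeds `∫ κS(x)(A_x) dPT` by at most
`∫ D_M(κS, κT) dPT` (change the kernel pointwise), and `∫ κS(x)(A_x) dPT` exceeds the source risk
`∫ κS(x)(A_x) dPS` by at most `d^{κS}_{M△M}(PS, PT)` (change the marginal). The term `λ_H` is a
nonnegative extra.
-/

open MeasureTheory ProbabilityTheory
open scoped ENNReal NNReal

noncomputable section

namespace IDG

variable {X : Type*} [MeasurableSpace X]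

/-- The risk of a hypothesis `h : X → ℤˣ` (values in `{-1, 1}`) with respect to a joint
distribution `μ` on `X × ℤˣ`: the measure of the error set `{(x, y) | h x ≠ y}`. -/
def risk (μ : Measure (X × ℤˣ)) (h : X → ℤˣ) : ℝ :=
  (μ {z : X × ℤˣ | h z.1 ≠ z.2}).toReal

/-- The symmetric-difference set `A(m, m') = {z | m z ≠ m' z}`. -/
def errSet (m m' : X × ℤˣ → ℤˣ) : Set (X × ℤˣ) := {z | m z ≠ m' z}

/-- The `x`-section of `A(m, m')`. -/
def xsec (m m' : X × ℤˣ → ℤˣ) (x : X) : Set ℤˣ := {y | m (x, y) ≠ m' (x, y)}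

/-- The `M△M`-divergence between two measures on `X × ℤˣ`. -/
def dMM (M : Set (X × ℤˣ → ℤˣ)) (μ ν : Measure (X × ℤˣ)) : ℝ :=
  ⨆ m : M, ⨆ m' : M, |(μ (errSet m.1 m'.1)).toReal - (ν (errSet m.1 m'.1)).toReal|

/-- The `κ`-weighted `M△M`-divergence between two measures on `X`. -/
def dMMker (M : Set (X × ℤˣ → ℤˣ)) (κ : Kernel X ℤˣ) (P Q : Measure X) : ℝ :=
  ⨆ m : M, ⨆ m' : M,
    |(∫ x, (κ x (xsec m.1 m'.1 x)).toReal ∂P) - (∫ x, (κ x (xsec m.1 m'.1 x)).toReal ∂Q)|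

/-- Pointwise posterior discrepancy between two kernels. -/
def DM (M : Set (X × ℤˣ → ℤˣ)) (κ κ' : Kernel X ℤˣ) (x : X) : ℝ :=
  ⨆ m : M, ⨆ m' : M, |(κ x (xsec m.1 m'.1 x)).toReal - (κ' x (xsec m.1 m'.1 x)).toReal|

instance Units.measurableSingletonClass {G : Type*} [Monoid G] [MeasurableSpace G]
    [MeasurableSingletonClass G] : MeasurableSingletonClass Gˣ :=
  ⟨fun u => MeasurableSpace.measurableSet_comap.mpr
    ⟨{(u : G)}, measurableSet_singleton _, by ext v; simp [Units.ext_iff]⟩⟩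

lemma abs_sub_le_ciSup₂ {ι : Type*} (a b : ι → ι → ℝ) (ha : ∀ i j, a i j ∈ Set.Icc 0 1)
    (hb : ∀ i j, b i j ∈ Set.Icc 0 1) (i j : ι) :
    |a i j - b i j| ≤ ⨆ i, ⨆ j, |a i j - b i j| := by
  refine le_ciSup₂ (f := fun i j => |a i j - b i j|) ⟨1, ?_⟩ i j
  rintro _ ⟨_, ⟨i, rfl⟩, j, rfl⟩
  exact abs_sub_le_of_nonneg_of_le (ha i j).1 (ha i j).2 (hb i j).1 (hb i j).2

lemma integral_mem_Icc_of_mem_Icc {P : Measure X} [IsProbabilityMeasure P] {f : X → ℝ}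
    (hf : ∀ x, f x ∈ Set.Icc 0 1) : ∫ x, f x ∂P ∈ Set.Icc 0 1 := by
  refine ⟨integral_nonneg fun x => (hf x).1, ?_⟩
  calc ∫ x, f x ∂P ≤ ∫ _, (1 : ℝ) ∂P :=
        integral_mono_of_nonneg (.of_forall fun x => (hf x).1) (integrable_const 1)
          (.of_forall fun x => (hf x).2)
    _ = 1 := by simp

lemma measurableSet_errSet {m m' : X × ℤˣ → ℤˣ} (hm : Measurable m) (hm' : Measurable m') :
    MeasurableSet (errSet m m') :=
  (measurableSet_eq_fun hm hm').compl

lemma measure_xsec_mem_Icc (κ : Kernel X ℤˣ) [IsMarkovKernel κ] (m m' : X × ℤˣ → ℤˣ) (x : X) :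
    (κ x (xsec m m' x)).toReal ∈ Set.Icc 0 1 :=
  ⟨ENNReal.toReal_nonneg, measureReal_le_one⟩

lemma measurable_measure_xsec (κ : Kernel X ℤˣ) [IsSFiniteKernel κ] {m m' : X × ℤˣ → ℤˣ}
    (hm : Measurable m) (hm' : Measurable m') :
    Measurable fun x => (κ x (xsec m m' x)).toReal :=
  (Kernel.measurable_kernel_prodMk_left (measurableSet_errSet hm hm')).ennreal_toReal

lemma integrable_measure_xsec (P : Measure X) [IsFiniteMeasure P] (κ : Kernel X ℤˣ)
    [IsMarkovKernel κ] {m m' : X × ℤˣ → ℤˣ} (hm : Measurable m) (hm' : Measurable m') :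
    Integrable (fun x => (κ x (xsec m m' x)).toReal) P :=
  .of_bound (measurable_measure_xsec κ hm hm').aestronglyMeasurable 1 <| .of_forall fun x => by
    rw [Real.norm_of_nonneg (measure_xsec_mem_Icc κ m m' x).1]
    exact (measure_xsec_mem_Icc κ m m' x).2

lemma toReal_compProd_errSet (P : Measure X) [SFinite P] (κ : Kernel X ℤˣ) [IsMarkovKernel κ]
    {m m' : X × ℤˣ → ℤˣ} (hm : Measurable m) (hm' : Measurable m') :
    ((P ⊗ₘ κ) (errSet m m')).toReal = ∫ x, (κ x (xsec m m' x)).toReal ∂P := by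
  rw [Measure.compProd_apply (measurableSet_errSet hm hm')]
  exact (integral_toReal
    (Kernel.measurable_kernel_prodMk_left (measurableSet_errSet hm hm')).aemeasurable
    (.of_forall fun x => measure_lt_top _ _)).symm

omit [MeasurableSpace X] in
lemma setOf_ne_eq_errSet (h : X → ℤˣ) :
    {z : X × ℤˣ | h z.1 ≠ z.2} = errSet (fun z => z.2 * h z.1) (fun _ => 1) := by
  ext z
  simp [errSet, mul_eq_one_iff_inv_eq, Int.units_inv_eq_self, eq_comm]

lemma risk_compProd_eq_integral (P : Measure X) [SFinite P] (κ : Kernel X ℤˣ) [IsMarkovKernel κ]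
    {h : X → ℤˣ} (hmh : Measurable fun z : X × ℤˣ => z.2 * h z.1) :
    risk (P ⊗ₘ κ) h = ∫ x, (κ x (xsec (fun z => z.2 * h z.1) (fun _ => 1) x)).toReal ∂P := by
  rw [risk, setOf_ne_eq_errSet, toReal_compProd_errSet P κ hmh measurable_const]

lemma risk_nonneg (μ : Measure (X × ℤˣ)) (h : X → ℤˣ) : 0 ≤ risk μ h :=
  ENNReal.toReal_nonneg

section Divergences

variable {M : Set (X × ℤˣ → ℤˣ)} {m m' : X × ℤˣ → ℤˣ}

lemma abs_sub_le_DM (κ κ' : Kernel X ℤˣ) [IsMarkovKernel κ] [IsMarkovKernel κ']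
    (hm : m ∈ M) (hm' : m' ∈ M) (x : X) :
    |(κ x (xsec m m' x)).toReal - (κ' x (xsec m m' x)).toReal| ≤ DM M κ κ' x :=
  abs_sub_le_ciSup₂ (fun m m' : M => (κ x (xsec m.1 m'.1 x)).toReal)
    (fun m m' : M => (κ' x (xsec m.1 m'.1 x)).toReal)
    (fun _ _ => measure_xsec_mem_Icc κ _ _ x) (fun _ _ => measure_xsec_mem_Icc κ' _ _ x)
    ⟨m, hm⟩ ⟨m', hm'⟩

lemma DM_mem_Icc (κ κ' : Kernel X ℤˣ) [IsMarkovKernel κ] [IsMarkovKernel κ']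
    (hM : M.Nonempty) (x : X) : DM M κ κ' x ∈ Set.Icc 0 1 := by
  obtain ⟨m, hm⟩ := hM
  have : Nonempty M := ⟨⟨m, hm⟩⟩
  refine ⟨(abs_nonneg _).trans (abs_sub_le_DM κ κ' hm hm x),
    ciSup_le fun m => ciSup_le fun m' => ?_⟩
  obtain ⟨h0, h1⟩ := measure_xsec_mem_Icc κ m.1 m'.1 x
  obtain ⟨h0', h1'⟩ := measure_xsec_mem_Icc κ' m.1 m'.1 x
  exact abs_sub_le_of_nonneg_of_le h0 h1 h0' h1'

lemma measurable_DM (hMcount : M.Countable) (hMmeas : ∀ m ∈ M, Measurable m)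
    (κ κ' : Kernel X ℤˣ) [IsSFiniteKernel κ] [IsSFiniteKernel κ'] :
    Measurable (DM M κ κ') := by
  have : Countable M := hMcount.to_subtype
  refine .iSup fun m => .iSup fun m' => ?_
  have hm := hMmeas m.1 m.2
  have hm' := hMmeas m'.1 m'.2
  exact ((measurable_measure_xsec κ hm hm').sub (measurable_measure_xsec κ' hm hm')).abs

lemma integrable_DM (hMcount : M.Countable) (hMmeas : ∀ m ∈ M, Measurable m)
    (hM : M.Nonempty) (P : Measure X) [IsFiniteMeasure P] (κ κ' : Kernel X ℤˣ)
    [IsMarkovKernel κ] [IsMarkovKernel κ'] : Integrable (DM M κ κ') P :=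
  .of_bound (measurable_DM hMcount hMmeas κ κ').aestronglyMeasurable 1 <| .of_forall fun x => by
    rw [Real.norm_of_nonneg (DM_mem_Icc κ κ' hM x).1]
    exact (DM_mem_Icc κ κ' hM x).2

lemma abs_sub_le_dMMker (κ : Kernel X ℤˣ) [IsMarkovKernel κ] (P Q : Measure X)
    [IsProbabilityMeasure P] [IsProbabilityMeasure Q] (hm : m ∈ M) (hm' : m' ∈ M) :
    |(∫ x, (κ x (xsec m m' x)).toReal ∂P) - (∫ x, (κ x (xsec m m' x)).toReal ∂Q)|
      ≤ dMMker M κ P Q :=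
  abs_sub_le_ciSup₂ (fun m m' : M => ∫ x, (κ x (xsec m.1 m'.1 x)).toReal ∂P)
    (fun m m' : M => ∫ x, (κ x (xsec m.1 m'.1 x)).toReal ∂Q)
    (fun _ _ => integral_mem_Icc_of_mem_Icc fun x => measure_xsec_mem_Icc κ _ _ x)
    (fun _ _ => integral_mem_Icc_of_mem_Icc fun x => measure_xsec_mem_Icc κ _ _ x)
    ⟨m, hm⟩ ⟨m', hm'⟩

lemma integral_measure_xsec_le (hMcount : M.Countable) (hMmeas : ∀ m ∈ M, Measurable m)
    (PS PT : Measure X) [IsProbabilityMeasure PS] [IsProbabilityMeasure PT]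
    (κS κT : Kernel X ℤˣ) [IsMarkovKernel κS] [IsMarkovKernel κT] (hm : m ∈ M) (hm' : m' ∈ M) :
    ∫ x, (κT x (xsec m m' x)).toReal ∂PT ≤
      ∫ x, (κS x (xsec m m' x)).toReal ∂PS + dMMker M κS PS PT + ∫ x, DM M κS κT x ∂PT := by
  have hS := integrable_measure_xsec PT κS (hMmeas m hm) (hMmeas m' hm')
  have hT := integrable_measure_xsec PT κT (hMmeas m hm) (hMmeas m' hm')
  have hDM := integrable_DM hMcount hMmeas ⟨m, hm⟩ PT κS κT
  have hkernels := fun x => (abs_le.1 (abs_sub_le_DM κS κT hm hm' x)).1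
  have hmeasures := (abs_le.1 (abs_sub_le_dMMker κS PS PT hm hm')).1
  calc ∫ x, (κT x (xsec m m' x)).toReal ∂PT
      ≤ ∫ x, (κS x (xsec m m' x)).toReal + DM M κS κT x ∂PT :=
        integral_mono hT (hS.add hDM) fun x => by linarith [hkernels x]
    _ = ∫ x, (κS x (xsec m m' x)).toReal ∂PT + ∫ x, DM M κS κT x ∂PT := integral_add hS hDM
    _ ≤ _ := by linarith

end Divergences

theorem joint_generalization_bound_general
    (M : Set (X × ℤˣ → ℤˣ)) (hMcount : M.Countable) (hMmeas : ∀ m ∈ M, Measurable m)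
    (PS PT : Measure X) (hPS : IsProbabilityMeasure PS) (hPT : IsProbabilityMeasure PT)
    (κS κT : Kernel X ℤˣ) (hκS : IsMarkovKernel κS) (hκT : IsMarkovKernel κT)
    (H : Set (X → ℤˣ))
    (h : X → ℤˣ)
    (hmh : (fun z : X × ℤˣ => z.2 * h z.1) ∈ M)
    (hone : (fun _ : X × ℤˣ => (1 : ℤˣ)) ∈ M) :
    risk (PT ⊗ₘ κT) h ≤
      risk (PS ⊗ₘ κS) h
      + dMMker M κS PS PT
      + (∫ x, DM M κS κT x ∂PT)
      + (⨅ h' : H, (risk (PS ⊗ₘ κS) h'.1 + risk (PT ⊗ₘ κT) h'.1)) := by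
  have hinf : 0 ≤ ⨅ h' : H, (risk (PS ⊗ₘ κS) h'.1 + risk (PT ⊗ₘ κT) h'.1) :=
    Real.iInf_nonneg fun h' => add_nonneg (risk_nonneg _ _) (risk_nonneg _ _)
  have hmh_meas : Measurable fun z : X × ℤˣ => z.2 * h z.1 := hMmeas _ hmh
  have hbound := integral_measure_xsec_le hMcount hMmeas PS PT κS κT hmh hone
  rw [← risk_compProd_eq_integral PT κT hmh_meas, ← risk_compProd_eq_integral PS κS hmh_meas]
    at hbound
  linarith

/-- **Generalization bound with joint distributions (Theorem A.2).** -/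
theorem joint_generalization_bound
    (M : Set (X × ℤˣ → ℤˣ)) (hMcount : M.Countable) (hMmeas : ∀ m ∈ M, Measurable m)
    (PS PT : Measure X) (hPS : IsProbabilityMeasure PS) (hPT : IsProbabilityMeasure PT)
    (κS κT : Kernel X ℤˣ) (hκS : IsMarkovKernel κS) (hκT : IsMarkovKernel κT)
    (H : Set (X → ℤˣ)) (hH : H.Nonempty) (hHmeas : ∀ h' ∈ H, Measurable h')
    (h : X → ℤˣ) (hmeas : Measurable h)
    (hmh : (fun z : X × ℤˣ => z.2 * h z.1) ∈ M)
    (hone : (fun _ : X × ℤˣ => (1 : ℤˣ)) ∈ M) :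
    risk (PT ⊗ₘ κT) h ≤
      risk (PS ⊗ₘ κS) h
      + dMMker M κS PS PT
      + (∫ x, DM M κS κT x ∂PT)
      + (⨅ h' : H, (risk (PS ⊗ₘ κS) h'.1 + risk (PT ⊗ₘ κT) h'.1)) :=
  joint_generalization_bound_general M hMcount hMmeas PS PT hPS hPT κS κT hκS hκT H h hmh hone

end IDG
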